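/- Suppose that for each bounded Borel function f : S → ℝ the sequence α_n(f) converges in probability, and let α be a random probability measure with α_n(f) → α(f) in probability for every bounded Borel f. Then X satisfies the weak law of large numbers: μ_n(f) → α(f) in probability for every bounded Borel f; in particular μ_n(f) − α_n(f) → 0 in probability for every bounded Borel f. -/

import Mathlib

/-!
Put `d i = f (X i) - α_i(f)`. These are bounded martingale differences for `Filt X`, hence
orthogonal in `L²`, so `E[(∑_{i<n} d i / n)²] ≤ 4C²/n` and the averaged martingale part tends to
`0` in probability by Chebyshev. What remains of `μ_n(f)` is the Cesàro mean of the `α_i(f)`;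
being uniformly bounded, they converge to `α(f)` in `L¹` (Vitali), and `L¹` convergence passes to
Cesàro means. Subtracting `α_n(f) → α(f)` gives the second claim.
-/

open MeasureTheory ProbabilityTheory Filter Topology
open scoped ENNReal NNReal

variable {Ω S : Type*}

/-- `Filt X n` is the σ-field `𝓕_n = σ(X_1,…,X_n)` generated by the first `n` variables.
Indexing convention: `X i` here denotes the paper's `X_{i+1}`, so that `Filt X 0 = ⊥`. -/
def Filt [MeasurableSpace S] (X : ℕ → Ω → S) (n : ℕ) : MeasurableSpace Ω :=
  ⨆ i ∈ Finset.range n, MeasurableSpace.comap (X i) inferInstance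

/-- The predictive mean `α_n(f) = E[f(X_{n+1}) ∣ 𝓕_n]` (here the paper's `X_{n+1}` is `X n`). -/
noncomputable def predMean [MeasurableSpace Ω] [MeasurableSpace S]
    (P : Measure Ω) (X : ℕ → Ω → S) (f : S → ℝ) (n : ℕ) : Ω → ℝ :=
  P[(fun ω => f (X n ω)) | Filt X n]

namespace MeasureTheory

section TendstoInMeasure

variable {ι E : Type*} {m : MeasurableSpace Ω} {μ : Measure Ω} {l : Filter ι}

section Normed

variable [SeminormedAddCommGroup E] {f f' : ι → Ω → E} {g g' : Ω → E}

theorem TendstoInMeasure.add (hf : TendstoInMeasure μ f l g) (hf' : TendstoInMeasure μ f' l g') :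
    TendstoInMeasure μ (f + f') l (g + g') := by
  rw [tendstoInMeasure_iff_norm] at hf hf' ⊢
  intro ε hε
  have hsub : ∀ i, {x | ε ≤ ‖(f + f') i x - (g + g') x‖} ⊆
      {x | ε / 2 ≤ ‖f i x - g x‖} ∪ {x | ε / 2 ≤ ‖f' i x - g' x‖} := by
    intro i x hx
    by_contra! hlt
    simp only [Set.mem_union, Set.mem_ofPred_eq, not_or, not_le] at hlt hx
    have := norm_add_le (f i x - g x) (f' i x - g' x)
    simp only [Pi.add_apply, add_sub_add_comm] at hx
    linarith
  have hsum := (hf (ε / 2) (half_pos hε)).add (hf' (ε / 2) (half_pos hε))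
  rw [add_zero] at hsum
  exact tendsto_of_tendsto_of_tendsto_of_le_of_le tendsto_const_nhds hsum (fun _ => zero_le)
    fun i => (measure_mono (hsub i)).trans (measure_union_le _ _)

theorem TendstoInMeasure.neg (hf : TendstoInMeasure μ f l g) :
    TendstoInMeasure μ (-f) l (-g) := by
  rw [tendstoInMeasure_iff_norm] at hf ⊢
  simpa only [Pi.neg_apply, ← neg_sub', norm_neg] using hf

theorem TendstoInMeasure.sub (hf : TendstoInMeasure μ f l g) (hf' : TendstoInMeasure μ f' l g') :
    TendstoInMeasure μ (f - f') l (g - g') := by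
  simpa only [sub_eq_add_neg] using hf.add hf'.neg

theorem TendstoInMeasure.ae_norm_le {f : ℕ → Ω → E} {K : ℝ} (hf : TendstoInMeasure μ f atTop g)
    (hbdd : ∀ n, ∀ᵐ x ∂μ, ‖f n x‖ ≤ K) : ∀ᵐ x ∂μ, ‖g x‖ ≤ K := by
  obtain ⟨ns, -, hns⟩ := hf.exists_seq_tendsto_ae
  filter_upwards [hns, ae_all_iff.2 hbdd] with x hx hK
  exact le_of_tendsto' hx.norm fun i => hK (ns i)

end Normed

variable [IsFiniteMeasure μ] {g : ι → Ω → ℝ} {h : Ω → ℝ}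

theorem tendstoInMeasure_of_tendsto_integral_abs_sub
    (hint : ∀ i, Integrable (fun ω => g i ω - h ω) μ)
    (hlim : Tendsto (fun i => ∫ ω, |g i ω - h ω| ∂μ) l (𝓝 0)) : TendstoInMeasure μ g l h := by
  rw [tendstoInMeasure_iff_measureReal_norm]
  intro ε hε
  refine squeeze_zero (fun _ => measureReal_nonneg) (fun i => ?_)
    (by simpa using hlim.div_const ε)
  rw [le_div_iff₀' hε]
  simpa only [Real.norm_eq_abs] using
    mul_meas_ge_le_integral_of_nonneg (.of_forall fun ω => abs_nonneg _) (hint i).abs ε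

theorem tendstoInMeasure_zero_of_tendsto_integral_sq
    (hint : ∀ i, Integrable (fun ω => g i ω ^ 2) μ)
    (hlim : Tendsto (fun i => ∫ ω, g i ω ^ 2 ∂μ) l (𝓝 0)) : TendstoInMeasure μ g l 0 := by
  rw [tendstoInMeasure_iff_measureReal_norm]
  intro ε hε
  refine squeeze_zero (fun _ => measureReal_nonneg) (fun i => ?_)
    (by simpa using hlim.div_const (ε ^ 2))
  have hset : {x | ε ≤ ‖g i x - (0 : Ω → ℝ) x‖} = {x | ε ^ 2 ≤ g i x ^ 2} := by
    ext x
    simp [sq_le_sq, abs_of_pos hε]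
  rw [le_div_iff₀' (by positivity), hset]
  exact mul_meas_ge_le_integral_of_nonneg (.of_forall fun ω => sq_nonneg _) (hint i) _

end TendstoInMeasure

section Cesaro

variable {m : MeasurableSpace Ω} {μ : Measure Ω}

theorem unifIntegrable_of_ae_norm_le {ι β : Type*} [NormedAddCommGroup β] {p : ℝ≥0∞}
    (hp : 1 ≤ p) (hp' : p ≠ ∞) {f : ι → Ω → β} {K : ℝ} (hf : ∀ i, AEStronglyMeasurable (f i) μ)
    (hbdd : ∀ i, ∀ᵐ x ∂μ, ‖f i x‖ ≤ K) : UnifIntegrable f p μ := by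
  refine unifIntegrable_of hp hp' hf fun _ _ => ⟨K.toNNReal + 1, fun i => ?_⟩
  have hzero : {x | K.toNNReal + 1 ≤ ‖f i x‖₊}.indicator (f i) =ᵐ[μ] 0 := by
    filter_upwards [hbdd i] with x hx
    refine Set.indicator_of_notMem (fun hmem => ?_) _
    have hle : (K.toNNReal : ℝ) + 1 ≤ ‖f i x‖ := by exact_mod_cast hmem
    linarith [Real.le_coe_toNNReal K]
  rw [eLpNorm_congr_ae hzero, eLpNorm_zero]
  exact zero_le

variable [IsFiniteMeasure μ]

theorem TendstoInMeasure.cesaro {g : ℕ → Ω → ℝ} {h : Ω → ℝ} {K : ℝ}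
    (hgh : TendstoInMeasure μ g atTop h) (hg : ∀ n, AEStronglyMeasurable (g n) μ)
    (hbdd : ∀ n, ∀ᵐ ω ∂μ, |g n ω| ≤ K) :
    TendstoInMeasure μ (fun n ω => (∑ i ∈ Finset.range n, g i ω) / n) atTop h := by
  have hg_int : ∀ n, Integrable (g n) μ := fun n => .of_bound (hg n) K (hbdd n)
  have hh_int : Integrable h μ :=
    .of_bound (hgh.aestronglyMeasurable hg) K (hgh.ae_norm_le hbdd)
  have hgh_int : ∀ n, Integrable (fun ω => g n ω - h ω) μ := fun n => (hg_int n).sub hh_int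
  set e : ℕ → ℝ := fun n => ∫ ω, |g n ω - h ω| ∂μ
  -- Vitali: uniform boundedness upgrades convergence in measure to `L¹` convergence.
  have he : Tendsto e atTop (𝓝 0) := by
    have hL1 := tendsto_Lp_finite_of_tendstoInMeasure le_rfl ENNReal.one_ne_top hg
      (memLp_one_iff_integrable.2 hh_int)
      (unifIntegrable_of_ae_norm_le le_rfl ENNReal.one_ne_top hg hbdd) hgh
    have heq : ∀ n, eLpNorm (g n - h) 1 μ = ENNReal.ofReal (e n) := fun n => by
      simpa [eLpNorm_one_eq_lintegral_enorm] using
        (ofReal_integral_norm_eq_lintegral_enorm (hgh_int n)).symm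
    simp_rw [heq] at hL1
    refine ((ENNReal.tendsto_toReal ENNReal.zero_ne_top).comp hL1).congr fun n => ?_
    exact ENNReal.toReal_ofReal (integral_nonneg fun _ => abs_nonneg _)
  have hmean_int : ∀ n : ℕ, Integrable (fun ω => (∑ i ∈ Finset.range n, g i ω) / n - h ω) μ :=
    fun n => ((integrable_finsetSum _ fun i _ => hg_int i).div_const _).sub hh_int
  have hbound : ∀ n : ℕ, 1 ≤ n → ∫ ω, |(∑ i ∈ Finset.range n, g i ω) / n - h ω| ∂μ ≤
      (n : ℝ)⁻¹ * ∑ i ∈ Finset.range n, e i := by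
    intro n hn
    have hpt : ∀ ω, |(∑ i ∈ Finset.range n, g i ω) / n - h ω| ≤
        (n : ℝ)⁻¹ * ∑ i ∈ Finset.range n, |g i ω - h ω| := fun ω => by
      have hmean : (∑ i ∈ Finset.range n, g i ω) / n - h ω =
          (n : ℝ)⁻¹ * ∑ i ∈ Finset.range n, (g i ω - h ω) := by
        have hn' : (n : ℝ) ≠ 0 := by positivity
        rw [Finset.sum_sub_distrib, Finset.sum_const, Finset.card_range, nsmul_eq_mul]
        field_simp
      rw [hmean, abs_mul, abs_inv, Nat.abs_cast]
      gcongr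
      exact Finset.abs_sum_le_sum_abs _ _
    calc ∫ ω, |(∑ i ∈ Finset.range n, g i ω) / n - h ω| ∂μ
        ≤ ∫ ω, (n : ℝ)⁻¹ * ∑ i ∈ Finset.range n, |g i ω - h ω| ∂μ :=
          integral_mono (hmean_int n).abs
            ((integrable_finsetSum _ fun i _ => (hgh_int i).abs).const_mul _) hpt
      _ = (n : ℝ)⁻¹ * ∑ i ∈ Finset.range n, e i := by
          rw [integral_const_mul, integral_finsetSum _ fun i _ => (hgh_int i).abs]
  refine tendstoInMeasure_of_tendsto_integral_abs_sub hmean_int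
    (squeeze_zero' (.of_forall fun _ => integral_nonneg fun _ => abs_nonneg _)
      ((eventually_ge_atTop 1).mono hbound) he.cesaro)

end Cesaro

section MartingaleDifference

variable {m₀ : MeasurableSpace Ω} {μ : Measure Ω} {d : ℕ → Ω → ℝ} {K : ℝ}

theorem condExp_sub_condExp_ae_eq_zero {m : MeasurableSpace Ω} (hm : m ≤ m₀)
    [SigmaFinite (μ.trim hm)] {f : Ω → ℝ} (hf : Integrable f μ) :
    μ[f - μ[f | m] | m] =ᵐ[μ] 0 := by
  have hsub := condExp_sub hf (integrable_condExp (m := m) (f := f)) m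
  rwa [condExp_of_stronglyMeasurable hm stronglyMeasurable_condExp integrable_condExp,
    sub_self] at hsub

theorem integral_mul_eq_zero_of_condExp_eq_zero [IsFiniteMeasure μ] {m : MeasurableSpace Ω}
    (hm : m ≤ m₀) {g f : Ω → ℝ} (hg : StronglyMeasurable[m] g) (hg_bdd : ∀ᵐ ω ∂μ, |g ω| ≤ K)
    (hf : Integrable f μ) (hce : μ[f | m] =ᵐ[μ] 0) : ∫ ω, g ω * f ω ∂μ = 0 := by
  have hpull : μ[g * f | m] =ᵐ[μ] g * μ[f | m] :=
    condExp_stronglyMeasurable_mul_of_bound hm hg hf K hg_bdd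
  calc ∫ ω, g ω * f ω ∂μ = ∫ ω, (μ[g * f | m]) ω ∂μ := (integral_condExp hm).symm
    _ = ∫ ω, (g * μ[f | m]) ω ∂μ := integral_congr_ae hpull
    _ = 0 := by
      have hzero : g * μ[f | m] =ᵐ[μ] 0 := hce.mono fun ω hω => by simp [hω]
      exact (integral_congr_ae hzero).trans (integral_zero _ _)

theorem integral_sq_sum_eq_sum_integral_sq_of_condExp_eq_zero [IsFiniteMeasure μ]
    (ℱ : Filtration ℕ m₀) (hd : ∀ i, StronglyMeasurable[ℱ (i + 1)] (d i))
    (hbdd : ∀ i, ∀ᵐ ω ∂μ, |d i ω| ≤ K) (hce : ∀ i, μ[d i | ℱ i] =ᵐ[μ] 0) (n : ℕ) :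
    ∫ ω, (∑ i ∈ Finset.range n, d i ω) ^ 2 ∂μ = ∑ i ∈ Finset.range n, ∫ ω, d i ω ^ 2 ∂μ := by
  set T : ℕ → Ω → ℝ := fun n ω => ∑ i ∈ Finset.range n, d i ω
  have hT : ∀ n, StronglyMeasurable[ℱ n] (T n) := fun n =>
    Finset.stronglyMeasurable_fun_sum _ fun i hi => (hd i).mono (ℱ.mono (Finset.mem_range.1 hi))
  have hT_bdd : ∀ n, ∀ᵐ ω ∂μ, |T n ω| ≤ n * K := fun n => by
    filter_upwards [ae_all_iff.2 hbdd] with ω hω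
    calc |T n ω| ≤ ∑ i ∈ Finset.range n, |d i ω| := Finset.abs_sum_le_sum_abs _ _
      _ ≤ n * K := by simpa using Finset.sum_le_sum fun i (_ : i ∈ Finset.range n) => hω i
  have hd_int : ∀ i, Integrable (d i) μ := fun i =>
    .of_bound ((hd i).mono (ℱ.le _)).aestronglyMeasurable K (hbdd i)
  induction n with
  | zero => simp
  | succ n ih =>
    have hT2 : MemLp (T n) 2 μ :=
      .of_bound ((hT n).mono (ℱ.le n)).aestronglyMeasurable _ (hT_bdd n)
    have hd2 : MemLp (d n) 2 μ := .of_bound (hd_int n).aestronglyMeasurable _ (hbdd n)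
    have hcross : ∫ ω, T n ω * d n ω ∂μ = 0 :=
      integral_mul_eq_zero_of_condExp_eq_zero (ℱ.le n) (hT n) (hT_bdd n) (hd_int n) (hce n)
    calc ∫ ω, T (n + 1) ω ^ 2 ∂μ
        = ∫ ω, (T n ω ^ 2 + 2 * (T n ω * d n ω) + d n ω ^ 2) ∂μ := by
          congr 1 with ω
          simp only [T, Finset.sum_range_succ]
          ring
      _ = ∫ ω, T n ω ^ 2 ∂μ + 2 * ∫ ω, T n ω * d n ω ∂μ + ∫ ω, d n ω ^ 2 ∂μ := by
          have hmul : Integrable (fun ω => 2 * (T n ω * d n ω)) μ :=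
            (hT2.integrable_mul hd2).const_mul 2
          have hsum : Integrable (fun ω => T n ω ^ 2 + 2 * (T n ω * d n ω)) μ :=
            hT2.integrable_sq.add hmul
          rw [integral_add hsum hd2.integrable_sq, integral_add hT2.integrable_sq hmul,
            integral_const_mul]
      _ = ∑ i ∈ Finset.range (n + 1), ∫ ω, d i ω ^ 2 ∂μ := by
          rw [hcross, ih, Finset.sum_range_succ]
          ring

theorem tendstoInMeasure_sum_div_of_condExp_eq_zero [IsProbabilityMeasure μ]
    (ℱ : Filtration ℕ m₀) (hd : ∀ i, StronglyMeasurable[ℱ (i + 1)] (d i))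
    (hbdd : ∀ i, ∀ᵐ ω ∂μ, |d i ω| ≤ K) (hce : ∀ i, μ[d i | ℱ i] =ᵐ[μ] 0) :
    TendstoInMeasure μ (fun n ω => (∑ i ∈ Finset.range n, d i ω) / n) atTop 0 := by
  have hd2 : ∀ i, MemLp (d i) 2 μ := fun i =>
    .of_bound ((hd i).mono (ℱ.le _)).aestronglyMeasurable K (hbdd i)
  have hsq_div : ∀ n : ℕ, (fun ω => ((∑ i ∈ Finset.range n, d i ω) / n) ^ 2) =
      fun ω => (∑ i ∈ Finset.range n, d i ω) ^ 2 / (n : ℝ) ^ 2 :=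
    fun _ => funext fun _ => div_pow _ _ _
  have hd_sq_le : ∀ i, ∫ ω, d i ω ^ 2 ∂μ ≤ K ^ 2 := fun i => by
    have hK : ∀ᵐ ω ∂μ, d i ω ^ 2 ≤ K ^ 2 :=
      (hbdd i).mono fun ω hω => sq_le_sq.2 (hω.trans (le_abs_self K))
    simpa using integral_mono_ae (hd2 i).integrable_sq (integrable_const _) hK
  refine tendstoInMeasure_zero_of_tendsto_integral_sq (fun n => ?_) ?_
  · rw [hsq_div]
    exact (memLp_finsetSum _ fun i _ => hd2 i).integrable_sq.div_const _
  refine squeeze_zero (fun n => integral_nonneg fun ω => sq_nonneg _) (fun n => ?_)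
    (tendsto_const_div_atTop_nhds_zero_nat (K ^ 2))
  rw [hsq_div, integral_div,
    integral_sq_sum_eq_sum_integral_sq_of_condExp_eq_zero ℱ hd hbdd hce]
  rcases Nat.eq_zero_or_pos n with rfl | hn
  · simp
  calc (∑ i ∈ Finset.range n, ∫ ω, d i ω ^ 2 ∂μ) / (n : ℝ) ^ 2
      ≤ (n * K ^ 2) / (n : ℝ) ^ 2 := by
        gcongr
        simpa using Finset.sum_le_sum fun i (_ : i ∈ Finset.range n) => hd_sq_le i
    _ = K ^ 2 / n := by field_simp

end MartingaleDifference

end MeasureTheory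

section Filt

variable [MeasurableSpace S]

theorem filt_mono (X : ℕ → Ω → S) : Monotone (Filt X) := fun _ _ hmn =>
  biSup_mono fun _ hi => Finset.mem_range.2 ((Finset.mem_range.1 hi).trans_le hmn)

theorem filt_le [MeasurableSpace Ω] {X : ℕ → Ω → S} (hX : ∀ i, Measurable (X i)) (n : ℕ) :
    Filt X n ≤ ‹MeasurableSpace Ω› :=
  iSup₂_le fun i _ => (hX i).comap_le

theorem measurable_filt_succ (X : ℕ → Ω → S) (i : ℕ) : Measurable[Filt X (i + 1)] (X i) :=
  measurable_iff_comap_le.2 <| le_iSup₂ (f := fun j (_ : j ∈ Finset.range (i + 1)) =>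
    MeasurableSpace.comap (X j) inferInstance) i (Finset.self_mem_range_succ i)

def filtFiltration [MeasurableSpace Ω] {X : ℕ → Ω → S} (hX : ∀ i, Measurable (X i)) :
    Filtration ℕ ‹MeasurableSpace Ω› :=
  ⟨Filt X, filt_mono X, filt_le hX⟩

end Filt

theorem stmt7_general [MeasurableSpace Ω] [MeasurableSpace S]
    (P : Measure Ω) [IsProbabilityMeasure P]
    (X : ℕ → Ω → S) (hX : ∀ i, Measurable (X i))
    (α : Ω → Measure S)
    (hlim : ∀ f : S → ℝ, Measurable f → (∃ C, ∀ x, |f x| ≤ C) →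
      TendstoInMeasure P (fun n => predMean P X f n) atTop (fun ω => ∫ x, f x ∂(α ω))) :
    ∀ f : S → ℝ, Measurable f → (∃ C, ∀ x, |f x| ≤ C) →
      TendstoInMeasure P (fun n ω => (∑ i ∈ Finset.range n, f (X i ω)) / n) atTop
        (fun ω => ∫ x, f x ∂(α ω)) ∧
      TendstoInMeasure P
        (fun n ω => (∑ i ∈ Finset.range n, f (X i ω)) / n - predMean P X f n ω) atTop
        (fun _ => 0) := by
  intro f hf ⟨C, hC⟩
  have hfX_bdd : ∀ i, ∀ᵐ ω ∂P, |f (X i ω)| ≤ C := fun i => .of_forall fun ω => hC _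
  have hfX_int : ∀ i, Integrable (fun ω => f (X i ω)) P := fun i =>
    .of_bound (hf.comp (hX i)).aestronglyMeasurable _ (hfX_bdd i)
  have hpred_bdd : ∀ n, ∀ᵐ ω ∂P, |predMean P X f n ω| ≤ C :=
    fun n => ae_bdd_abs_condExp_of_ae_bdd_abs (hfX_bdd n)
  have hpred_meas : ∀ n, StronglyMeasurable[Filt X n] (predMean P X f n) :=
    fun n => stronglyMeasurable_condExp
  have hmart : TendstoInMeasure P (fun n ω =>
      (∑ i ∈ Finset.range n, (f (X i ω) - predMean P X f i ω)) / n) atTop 0 := by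
    refine tendstoInMeasure_sum_div_of_condExp_eq_zero (filtFiltration hX) (K := 2 * C)
      (fun i => ?_) (fun i => ?_)
      (fun i => condExp_sub_condExp_ae_eq_zero (filt_le hX i) (hfX_int i))
    · exact (hf.comp (measurable_filt_succ X i)).stronglyMeasurable.sub
        ((hpred_meas i).mono (filt_mono X i.le_succ))
    · filter_upwards [hfX_bdd i, hpred_bdd i] with ω h₁ h₂
      linarith [abs_sub (f (X i ω)) (predMean P X f i ω)]
  have hlim_f := hlim f hf ⟨C, hC⟩
  have hpred_avg := hlim_f.cesaro
    (fun n => ((hpred_meas n).mono (filt_le hX n)).aestronglyMeasurable) hpred_bdd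
  have hemp : TendstoInMeasure P (fun n ω => (∑ i ∈ Finset.range n, f (X i ω)) / n) atTop
      (fun ω => ∫ x, f x ∂(α ω)) := by
    refine (hmart.add hpred_avg).congr (fun n => .of_forall fun ω => ?_)
      (.of_forall fun ω => zero_add _)
    simp only [Pi.add_apply, Finset.sum_sub_distrib]
    ring
  exact ⟨hemp, (hemp.sub hlim_f).congr (fun n => .of_forall fun ω => rfl)
    (.of_forall fun ω => sub_self _)⟩

/-- Remarks (iii)-(iv): under convergence in probability of all predictive
means, with limit random probability measure `α`, the weak law of large numbers holds:
`μ_n(f) → α(f)` in probability, and in particular `μ_n(f) − α_n(f) → 0` in probability. -/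
theorem stmt7 [MeasurableSpace Ω]
    [TopologicalSpace S] [PolishSpace S] [MeasurableSpace S] [BorelSpace S]
    (P : Measure Ω) [IsProbabilityMeasure P]
    (X : ℕ → Ω → S) (hX : ∀ i, Measurable (X i))
    (hconv : (∀ f : S → ℝ, Measurable f → (∃ C, ∀ x, |f x| ≤ C) →
      ∃ l : Ω → ℝ, TendstoInMeasure P (fun n => predMean P X f n) atTop l))
    (α : Ω → Measure S) (hα : ∀ ω, IsProbabilityMeasure (α ω))
    (hαmeas : ∀ B : Set S, MeasurableSet B → Measurable fun ω => α ω B)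
    (hlim : ∀ f : S → ℝ, Measurable f → (∃ C, ∀ x, |f x| ≤ C) →
      TendstoInMeasure P (fun n => predMean P X f n) atTop (fun ω => ∫ x, f x ∂(α ω))) :
    ∀ f : S → ℝ, Measurable f → (∃ C, ∀ x, |f x| ≤ C) →
      TendstoInMeasure P (fun n ω => (∑ i ∈ Finset.range n, f (X i ω)) / n) atTop
        (fun ω => ∫ x, f x ∂(α ω)) ∧
      TendstoInMeasure P
        (fun n ω => (∑ i ∈ Finset.range n, f (X i ω)) / n - predMean P X f n ω) atTop
        (fun _ => 0) :=
  stmt7_general P X hX α hlim
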